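/- Let σ > 0, ε ≥ 0, δ ∈ ℝ, and set K = √(1 + δ²/(1+ε²)). Then the function A(x) = (2(σ+1)/(1 + K cosh(2σx/√(1+ε²))))^{1/(2σ)} is a positive solution on ℝ of the ODE (1+ε²)A'' + (A^{2σ} − 1)A + ((2σ+1)δ²/(4(1+ε²)(σ+1)²)) A^{4σ+1} = 0, with A(x) → 0 as |x| → ∞. -/

import Mathlib

/-!
Put `u = 1 + K cosh (k x)` with `k = 2σ/√(1+ε²)`, so that `A = (2(σ+1)/u)^p` with `p = 1/(2σ)`.
Writing `A = exp (p (log (2(σ+1)) - log u))` gives `A'' = A ((log A)'² + (log A)'')`, and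
`A^{2σ} = 2(σ+1)/u`, `A^{4σ+1} = (2(σ+1)/u)² A`. Dividing the equation by `A > 0` leaves a rational
identity in `cosh (k x)` and `sinh (k x)`, which holds by `sinh² = cosh² - 1` and
`δ² / (1+ε²) = K² - 1`. Decay follows from `u → ∞` as `|x| → ∞` and `p > 0`.
-/

open Real Filter Topology

theorem Real.abs_le_cosh (y : ℝ) : |y| ≤ cosh y := by
  rw [← cosh_abs]
  exact (self_le_sinh_iff.2 (abs_nonneg y)).trans (sinh_lt_cosh _).le

theorem Real.tendsto_cosh_mul_cocompact {k : ℝ} (hk : k ≠ 0) :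
    Tendsto (fun x => cosh (k * x)) (cocompact ℝ) atTop := by
  refine tendsto_atTop_mono (fun x => ?_)
    (tendsto_norm_cocompact_atTop.const_mul_atTop (abs_pos.2 hk))
  rw [norm_eq_abs, ← abs_mul]
  exact abs_le_cosh _

theorem Real.rpow_two_mul_add_one {x : ℝ} (hx : 0 < x) (y : ℝ) :
    x ^ (2 * y + 1) = (x ^ y) ^ 2 * x := by
  rw [rpow_add hx, rpow_one, mul_comm 2 y, rpow_mul hx.le, rpow_two]

theorem deriv_deriv_exp_comp {g g' g'' : ℝ → ℝ} (hg : ∀ x, HasDerivAt g (g' x) x)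
    (hg' : ∀ x, HasDerivAt g' (g'' x) x) (x : ℝ) :
    deriv (deriv fun y => exp (g y)) x = exp (g x) * (g' x ^ 2 + g'' x) := by
  have h : deriv (fun y => exp (g y)) = fun y => exp (g y) * g' y :=
    funext fun y => (hg y).exp.deriv
  rw [h, ((hg x).exp.fun_mul (hg' x)).deriv]
  ring

section OneAddMulCosh

variable {K : ℝ} (k : ℝ)

theorem one_add_mul_cosh_pos (hK : 0 ≤ K) (t : ℝ) : 0 < 1 + K * cosh t := by
  nlinarith [one_le_cosh t]

theorem hasDerivAt_one_add_mul_cosh (x : ℝ) :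
    HasDerivAt (fun x => 1 + K * cosh (k * x)) (K * k * sinh (k * x)) x :=
  ((((hasDerivAt_const_mul k).cosh).const_mul K).const_add 1).congr_deriv (by ring)

theorem hasDerivAt_mul_sinh_div_one_add_mul_cosh (hK : 0 ≤ K) (x : ℝ) :
    HasDerivAt (fun x => K * k * sinh (k * x) / (1 + K * cosh (k * x)))
      (K * k ^ 2 * (K + cosh (k * x)) / (1 + K * cosh (k * x)) ^ 2) x := by
  have hsinh := ((hasDerivAt_const_mul (x := x) k).sinh).const_mul (K * k)
  refine (hsinh.fun_div (hasDerivAt_one_add_mul_cosh k x)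
    (one_add_mul_cosh_pos hK _).ne').congr_deriv ?_
  congr 1
  linear_combination (K * k) ^ 2 * cosh_sq (k * x)

end OneAddMulCosh

noncomputable def coshProfile (M K k p : ℝ) (x : ℝ) : ℝ :=
  (M / (1 + K * cosh (k * x))) ^ p

namespace coshProfile

variable {M K : ℝ} (k p : ℝ)

theorem pos (hM : 0 < M) (hK : 0 ≤ K) (x : ℝ) : 0 < coshProfile M K k p x :=
  rpow_pos_of_pos (div_pos hM (one_add_mul_cosh_pos hK _)) p

theorem eq_exp (hM : 0 < M) (hK : 0 ≤ K) :
    coshProfile M K k p = fun x => exp (p * (log M - log (1 + K * cosh (k * x)))) := by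
  funext x
  rw [coshProfile, rpow_def_of_pos (div_pos hM (one_add_mul_cosh_pos hK _)),
    log_div hM.ne' (one_add_mul_cosh_pos hK _).ne', mul_comm]

theorem deriv_deriv (hM : 0 < M) (hK : 0 ≤ K) (x : ℝ) :
    deriv (deriv (coshProfile M K k p)) x = coshProfile M K k p x *
      ((p * (K * k * sinh (k * x) / (1 + K * cosh (k * x)))) ^ 2
        - p * (K * k ^ 2 * (K + cosh (k * x)) / (1 + K * cosh (k * x)) ^ 2)) := by
  have hlog : ∀ x, HasDerivAt (fun x => p * (log M - log (1 + K * cosh (k * x))))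
      (-(p * (K * k * sinh (k * x) / (1 + K * cosh (k * x))))) x := fun x => by
    refine ((((hasDerivAt_one_add_mul_cosh k x).log
      (one_add_mul_cosh_pos hK _).ne').const_sub (log M)).const_mul p).congr_deriv ?_
    ring
  rw [eq_exp k p hM hK, deriv_deriv_exp_comp hlog
    (fun x => ((hasDerivAt_mul_sinh_div_one_add_mul_cosh k hK x).const_mul p).neg)]
  ring

theorem tendsto_cocompact (hK : 0 < K) (hk : k ≠ 0) (hp : 0 < p) :
    Tendsto (coshProfile M K k p) (cocompact ℝ) (𝓝 0) := by
  have hu : Tendsto (fun x => 1 + K * cosh (k * x)) (cocompact ℝ) atTop :=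
    tendsto_atTop_add_const_left _ 1 ((tendsto_cosh_mul_cocompact hk).const_mul_atTop hK)
  have h := ((tendsto_const_nhds (x := M)).div_atTop hu).rpow_const (Or.inr hp.le)
  rwa [zero_rpow hp.ne'] at h

/-- The equation of `coshProfile.ode` divided by the profile, with `C = cosh (k x)` and
`S = sinh (k x)`. -/
theorem ode_div_eq_zero {σ a δ C S : ℝ} (hσ : 0 < σ) (ha : 0 < a) (hK : K ^ 2 = 1 + δ ^ 2 / a)
    (hS : S ^ 2 = C ^ 2 - 1) (hu : 0 < 1 + K * C) :
    a * ((1 / (2 * σ) * (K * (2 * σ / √a) * S / (1 + K * C))) ^ 2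
        - 1 / (2 * σ) * (K * (2 * σ / √a) ^ 2 * (K + C) / (1 + K * C) ^ 2))
      + (2 * (σ + 1) / (1 + K * C) - 1)
      + (2 * σ + 1) * δ ^ 2 / (4 * a * (σ + 1) ^ 2) * (2 * (σ + 1) / (1 + K * C)) ^ 2 = 0 := by
  have hδ : δ ^ 2 = a * (K ^ 2 - 1) := by
    field_simp at hK
    linarith
  obtain ⟨s, hs, rfl⟩ : ∃ s, 0 < s ∧ a = s ^ 2 := ⟨√a, sqrt_pos.2 ha, (sq_sqrt ha.le).symm⟩
  rw [hδ, sqrt_sq hs.le]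
  field_simp
  rw [hS]
  ring

theorem ode {σ a δ : ℝ} (hσ : 0 < σ) (ha : 0 < a) (hK : K ^ 2 = 1 + δ ^ 2 / a) (hK0 : 0 ≤ K)
    (x : ℝ) :
    a * deriv (deriv (coshProfile (2 * (σ + 1)) K (2 * σ / √a) (1 / (2 * σ)))) x
      + (coshProfile (2 * (σ + 1)) K (2 * σ / √a) (1 / (2 * σ)) x ^ (2 * σ : ℝ) - 1)
        * coshProfile (2 * (σ + 1)) K (2 * σ / √a) (1 / (2 * σ)) x
      + (2 * σ + 1) * δ ^ 2 / (4 * a * (σ + 1) ^ 2)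
        * coshProfile (2 * (σ + 1)) K (2 * σ / √a) (1 / (2 * σ)) x ^ (4 * σ + 1 : ℝ) = 0 := by
  set A := coshProfile (2 * (σ + 1)) K (2 * σ / √a) (1 / (2 * σ))
  set u := 1 + K * cosh (2 * σ / √a * x)
  have hM : 0 < 2 * (σ + 1) := by positivity
  have hA_pow : A x ^ (2 * σ) = 2 * (σ + 1) / u := by
    show ((2 * (σ + 1) / u) ^ (1 / (2 * σ))) ^ (2 * σ) = _
    rw [one_div, rpow_inv_rpow (div_pos hM (one_add_mul_cosh_pos hK0 _)).le (by positivity)]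
  have key := ode_div_eq_zero (C := cosh (2 * σ / √a * x)) hσ ha hK (sinh_sq _)
    (one_add_mul_cosh_pos hK0 _)
  rw [deriv_deriv _ _ hM hK0, show (4 * σ + 1 : ℝ) = 2 * (2 * σ) + 1 by ring,
    rpow_two_mul_add_one (pos _ _ hM hK0 x), hA_pow]
  linear_combination A x * key

end coshProfile

theorem stmt11_general (σ ε δ : ℝ) (hσ : 0 < σ)
    (K : ℝ) (hK : K = Real.sqrt (1 + δ ^ 2 / (1 + ε ^ 2)))
    (A : ℝ → ℝ)
    (hA : A = fun x => (2 * (σ + 1) /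
      (1 + K * Real.cosh (2 * σ * x / Real.sqrt (1 + ε ^ 2)))) ^ (1 / (2 * σ) : ℝ)) :
    (∀ x, 0 < A x) ∧
    (∀ x : ℝ,
      (1 + ε ^ 2) * deriv (deriv A) x + (A x ^ (2 * σ : ℝ) - 1) * A x
        + ((2 * σ + 1) * δ ^ 2 / (4 * (1 + ε ^ 2) * (σ + 1) ^ 2))
          * A x ^ (4 * σ + 1 : ℝ) = 0) ∧
    Filter.Tendsto A Filter.atTop (nhds 0) ∧
    Filter.Tendsto A Filter.atBot (nhds 0) := by
  have ha : 0 < 1 + ε ^ 2 := by positivity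
  have hK_sq : K ^ 2 = 1 + δ ^ 2 / (1 + ε ^ 2) := hK ▸ sq_sqrt (by positivity)
  have hK_pos : 0 < K := hK ▸ sqrt_pos.2 (by positivity)
  have hA_eq : A = coshProfile (2 * (σ + 1)) K (2 * σ / √(1 + ε ^ 2)) (1 / (2 * σ)) := by
    rw [hA]
    funext x
    rw [coshProfile, mul_div_right_comm (2 * σ) x]
  subst hA_eq
  have hlim := coshProfile.tendsto_cocompact (M := 2 * (σ + 1)) (2 * σ / √(1 + ε ^ 2))
    (1 / (2 * σ)) hK_pos (by positivity) (by positivity)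
  exact ⟨coshProfile.pos _ _ (by positivity) hK_pos.le, coshProfile.ode hσ ha hK_sq hK_pos.le,
    hlim.mono_left atTop_le_cocompact, hlim.mono_left atBot_le_cocompact⟩

/-- Let `σ > 0`, `ε ≥ 0`, `δ ∈ ℝ`, `K = √(1 + δ²/(1+ε²))`. Then
`A(x) = (2(σ+1)/(1 + K cosh(2σx/√(1+ε²))))^{1/(2σ)}` is a positive solution on `ℝ` of
`(1+ε²)A'' + (A^{2σ} − 1)A + ((2σ+1)δ²/(4(1+ε²)(σ+1)²)) A^{4σ+1} = 0`
with `A(x) → 0` as `|x| → ∞`. -/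
theorem stmt11 (σ ε δ : ℝ) (hσ : 0 < σ) (hε : 0 ≤ ε)
    (K : ℝ) (hK : K = Real.sqrt (1 + δ ^ 2 / (1 + ε ^ 2)))
    (A : ℝ → ℝ)
    (hA : A = fun x => (2 * (σ + 1) /
      (1 + K * Real.cosh (2 * σ * x / Real.sqrt (1 + ε ^ 2)))) ^ (1 / (2 * σ) : ℝ)) :
    (∀ x, 0 < A x) ∧
    (∀ x : ℝ,
      (1 + ε ^ 2) * deriv (deriv A) x + (A x ^ (2 * σ : ℝ) - 1) * A x
        + ((2 * σ + 1) * δ ^ 2 / (4 * (1 + ε ^ 2) * (σ + 1) ^ 2))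
          * A x ^ (4 * σ + 1 : ℝ) = 0) ∧
    Filter.Tendsto A Filter.atTop (nhds 0) ∧
    Filter.Tendsto A Filter.atBot (nhds 0) :=
  stmt11_general σ ε δ hσ K hK A hA
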